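/- If X ~ ESBIII(c,k,ε) and r is a natural number with c > r, then E(X^r) = (k/2) B(1 - r/c, r/c + k) [(1+ε)^{r+1} + (-1)^r (1-ε)^{r+1}]. -/

import Mathlib

/-!
On each half-line the ESBIII density is half a Burr III density
`c k x^{-(c+1)} (1 + x^{-c})^{-(k+1)}` rescaled by `1 + ε` (for `x > 0`) or `1 - ε` (for `x < 0`),
so each half of the moment is a rescaled Burr III moment. The substitution `x = t^{-1/c}` turns
the Burr III moment into the Beta integral of the second kind `∫₀^∞ t^{a-1} (1+t)^{-(a+b)} dt`,
which `t ↦ t / (1 + t)` maps to the usual one.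
-/

open Real

/-- sign function with sign(0) = 1, as in the paper. -/
noncomputable def sgn (x : ℝ) : ℝ := if x < 0 then -1 else 1

noncomputable def esbiiiPdf (c k ε : ℝ) (x : ℝ) : ℝ :=
  (c * k / 2) * ((sgn x * x) / (1 + sgn x * ε)) ^ (-(c + 1)) *
    (1 + ((sgn x * x) / (1 + sgn x * ε)) ^ (-c)) ^ (-(k + 1))

open MeasureTheory Set ProbabilityTheory

lemma integral_Ioo_rpow_mul_one_sub_rpow {a b : ℝ} (ha : 0 < a) (hb : 0 < b) :
    ∫ x in Ioo (0 : ℝ) 1, x ^ (a - 1) * (1 - x) ^ (b - 1) = beta a b := by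
  have h_ofReal : ∀ x ∈ Ioo (0 : ℝ) 1,
      (x : ℂ) ^ ((a : ℂ) - 1) * (1 - (x : ℂ)) ^ ((b : ℂ) - 1) =
        ((x ^ (a - 1) * (1 - x) ^ (b - 1) : ℝ) : ℂ) := fun x hx => by
    rw [Complex.ofReal_mul, Complex.ofReal_cpow hx.1.le,
      Complex.ofReal_cpow (sub_nonneg.2 hx.2.le)]
    push_cast
    ring
  rw [beta_eq_betaIntegralReal a b ha hb, Complex.betaIntegral,
    intervalIntegral.integral_of_le zero_le_one, integral_Ioc_eq_integral_Ioo,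
    setIntegral_congr_fun measurableSet_Ioo h_ofReal, integral_complex_ofReal, Complex.ofReal_re]

lemma integral_Ioi_rpow_mul_one_add_rpow {a b : ℝ} (ha : 0 < a) (hb : 0 < b) :
    ∫ t in Ioi (0 : ℝ), t ^ (a - 1) * (1 + t) ^ (-(a + b)) = beta a b := by
  set φ : ℝ → ℝ := fun t => t / (1 + t)
  have hφ' : ∀ t ∈ Ioi (0 : ℝ), HasDerivWithinAt φ ((1 + t) ^ 2)⁻¹ (Ioi 0) t := by
    intro t ht
    have ht : 1 + t ≠ 0 := by linarith [mem_Ioi.1 ht]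
    refine (((hasDerivAt_id' t).div ((hasDerivAt_id' t).const_add 1) ht).congr_deriv ?_)
      |>.hasDerivWithinAt
    field_simp
    ring
  have hφ_inj : InjOn φ (Ioi 0) := fun s hs t ht hst => by
    have hs : 1 + s ≠ 0 := by linarith [mem_Ioi.1 hs]
    have ht : 1 + t ≠ 0 := by linarith [mem_Ioi.1 ht]
    simp only [φ] at hst
    field_simp at hst
    linarith
  have hφ_image : φ '' Ioi 0 = Ioo 0 1 := by
    ext x
    refine ⟨?_, fun hx => ⟨x / (1 - x), div_pos hx.1 (sub_pos.2 hx.2), ?_⟩⟩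
    · rintro ⟨t, ht, rfl⟩
      have ht : 0 < t := ht
      exact ⟨by positivity, (div_lt_one (by positivity)).2 (by linarith)⟩
    · have : 1 - x ≠ 0 := (sub_pos.2 hx.2).ne'
      simp only [φ]
      field_simp
      ring
  rw [← integral_Ioo_rpow_mul_one_sub_rpow ha hb, ← hφ_image,
    integral_image_eq_integral_abs_deriv_smul measurableSet_Ioi hφ' hφ_inj]
  refine setIntegral_congr_fun measurableSet_Ioi fun t ht => ?_
  have ht : 0 < t := ht
  have h1t : 0 < 1 + t := by linarith
  have hsub : 1 - t / (1 + t) = (1 + t)⁻¹ := by field_simp; ring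
  simp only [φ]
  rw [hsub, smul_eq_mul, abs_of_pos (by positivity), div_rpow ht.le h1t.le, inv_rpow h1t.le,
    show -(a + b) = -2 - (a - 1) - (b - 1) by ring, rpow_sub h1t, rpow_sub h1t, rpow_neg h1t.le,
    rpow_two]
  field_simp

noncomputable def burrIIIPdf (c k x : ℝ) : ℝ :=
  c * k * x ^ (-(c + 1)) * (1 + x ^ (-c)) ^ (-(k + 1))

lemma integral_Ioi_rpow_mul_burrIIIPdf {c k p : ℝ} (hc : 0 < c) (hpk : -(c * k) < p)
    (hpc : p < c) :
    ∫ x in Ioi (0 : ℝ), x ^ p * burrIIIPdf c k x = k * beta (1 - p / c) (p / c + k) := by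
  have ha : 0 < 1 - p / c := by rw [sub_pos, div_lt_one hc]; exact hpc
  have hb : 0 < p / c + k := by
    have : -k < p / c := by rw [lt_div_iff₀ hc]; linarith
    linarith
  rw [← integral_Ioi_rpow_mul_one_add_rpow ha hb, ← integral_const_mul,
    ← integral_comp_rpow_Ioi _ (neg_ne_zero.2 (inv_ne_zero hc.ne'))]
  refine setIntegral_congr_fun measurableSet_Ioi fun y hy => ?_
  have hy : 0 < y := hy
  simp only [burrIIIPdf]
  rw [← rpow_mul hy.le, ← rpow_mul hy.le, ← rpow_mul hy.le,
    show -c⁻¹ * -c = 1 by field_simp, rpow_one, abs_neg, abs_of_pos (inv_pos.2 hc), smul_eq_mul,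
    show -(1 - p / c + (p / c + k)) = -(k + 1) by ring]
  have hexp :
      y ^ (1 - p / c - 1) = y ^ (-c⁻¹ - 1) * y ^ (-c⁻¹ * p) * y ^ (-c⁻¹ * -(c + 1)) := by
    rw [← rpow_add hy, ← rpow_add hy]
    congr 1
    field_simp
    ring
  rw [hexp]
  field_simp

lemma integral_Ioi_rpow_mul_comp_div (g : ℝ → ℝ) (p : ℝ) {s : ℝ} (hs : 0 < s) :
    ∫ x in Ioi (0 : ℝ), x ^ p * g (x / s) =
      s ^ (p + 1) * ∫ x in Ioi (0 : ℝ), x ^ p * g x := by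
  have h := integral_comp_mul_right_Ioi (fun x => x ^ p * g x) 0 (inv_pos.2 hs)
  rw [zero_mul, inv_inv, smul_eq_mul] at h
  rw [rpow_add_one hs.ne', mul_comm _ s, mul_assoc, mul_left_comm, ← h, ← integral_const_mul]
  refine setIntegral_congr_fun measurableSet_Ioi fun x hx => ?_
  rw [← div_eq_mul_inv, div_rpow (le_of_lt hx) hs.le]
  field_simp

lemma integral_Ioi_pow_mul_burrIIIPdf_div {c k s : ℝ} (hc : 0 < c) (hk : 0 < k) (hs : 0 < s)
    {r : ℕ} (hrc : (r : ℝ) < c) :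
    ∫ x in Ioi (0 : ℝ), x ^ r * burrIIIPdf c k (x / s) =
      s ^ (r + 1) * (k * beta (1 - r / c) (r / c + k)) := by
  have hr : -(c * k) < r := by have := r.cast_nonneg (α := ℝ); nlinarith
  simp_rw [← rpow_natCast _ r]
  rw [integral_Ioi_rpow_mul_comp_div _ _ hs, integral_Ioi_rpow_mul_burrIIIPdf hc hr hrc]
  norm_cast

lemma esbiiiPdf_of_nonneg (c k ε : ℝ) {x : ℝ} (hx : 0 ≤ x) :
    esbiiiPdf c k ε x = burrIIIPdf c k (x / (1 + ε)) / 2 := by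
  simp only [esbiiiPdf, burrIIIPdf, sgn, if_neg hx.not_gt, one_mul]
  ring

lemma esbiiiPdf_neg (c k ε : ℝ) {x : ℝ} (hx : 0 < x) :
    esbiiiPdf c k ε (-x) = burrIIIPdf c k (x / (1 - ε)) / 2 := by
  simp only [esbiiiPdf, burrIIIPdf, sgn, if_pos (neg_neg_of_pos hx), neg_one_mul, neg_neg,
    ← sub_eq_add_neg]
  ring

lemma integral_Ioi_pow_mul_esbiiiPdf {c k ε : ℝ} (hc : 0 < c) (hk : 0 < k) (hε : -1 < ε)
    {r : ℕ} (hrc : (r : ℝ) < c) :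
    ∫ x in Ioi (0 : ℝ), x ^ r * esbiiiPdf c k ε x =
      (1 + ε) ^ (r + 1) * (k / 2 * beta (1 - r / c) (r / c + k)) := by
  rw [setIntegral_congr_fun measurableSet_Ioi fun x hx => by
      rw [esbiiiPdf_of_nonneg c k ε (le_of_lt hx), mul_div_assoc'],
    integral_div, integral_Ioi_pow_mul_burrIIIPdf_div hc hk (by linarith) hrc]
  ring

lemma integral_Iic_pow_mul_esbiiiPdf {c k ε : ℝ} (hc : 0 < c) (hk : 0 < k) (hε : ε < 1)
    {r : ℕ} (hrc : (r : ℝ) < c) :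
    ∫ x in Iic (0 : ℝ), x ^ r * esbiiiPdf c k ε x =
      (-1) ^ r * (1 - ε) ^ (r + 1) * (k / 2 * beta (1 - r / c) (r / c + k)) := by
  rw [← neg_zero, ← integral_comp_neg_Ioi,
    setIntegral_congr_fun measurableSet_Ioi fun x hx => by
      rw [esbiiiPdf_neg c k ε hx, neg_pow, mul_assoc, mul_div_assoc'],
    integral_const_mul, integral_div, integral_Ioi_pow_mul_burrIIIPdf_div hc hk (by linarith) hrc]
  ring

/-- rth moment of the ESBIII distribution, for a natural number r < c. -/
theorem esbiii_moment (c k ε : ℝ) (hc : 0 < c) (hk : 0 < k)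
    (hε : ε ∈ Set.Ioo (-1 : ℝ) 1) (r : ℕ) (hrc : (r : ℝ) < c) :
    ∫ x : ℝ, x ^ r * esbiiiPdf c k ε x =
      (k / 2) *
        (Real.Gamma (1 - r / c) * Real.Gamma (r / c + k) /
          Real.Gamma ((1 - r / c) + (r / c + k))) *
        ((1 + ε) ^ (r + 1) + (-1 : ℝ) ^ r * (1 - ε) ^ (r + 1)) := by
  obtain ⟨hε₁, hε₂⟩ := hε
  have hB : 0 < k / 2 * beta (1 - r / c) (r / c + k) := by
    have : (r : ℝ) / c < 1 := (div_lt_one hc).2 hrc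
    exact mul_pos (by positivity) (beta_pos (by linarith) (by positivity))
  have hneg := integral_Iic_pow_mul_esbiiiPdf hc hk hε₂ hrc
  have hpos := integral_Ioi_pow_mul_esbiiiPdf hc hk hε₁ hrc
  -- Both halves have nonzero integrals, which forces their integrability.
  rw [← intervalIntegral.integral_Iic_add_Ioi (.of_integral_ne_zero ?_) (.of_integral_ne_zero ?_),
    hneg, hpos, beta]
  · ring
  · rw [hneg]
    exact mul_ne_zero (mul_ne_zero (by simp) (pow_ne_zero _ (by linarith))) hB.ne'
  · rw [hpos]
    exact mul_ne_zero (pow_ne_zero _ (by linarith)) hB.ne'
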